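/- (Lemma 2.4) Let μ ≥ 0 and 0 < a_1 ≤ a, and assume Υ_{μ,T,a_1} := inf_{u ∈ S(a_1)} I_{μ,T}(u) < 0. Then Υ_{μ,T,a_1} = m_μ(a_1), where m_μ(a_1) = inf { I_μ(u) : u ∈ S(a_1), [u] < R_0 }. -/

import Mathlib

open MeasureTheory Filter Set Topology
open scoped ENNReal

noncomputable section

abbrev EN (N : ℕ) := EuclideanSpace ℝ (Fin N)

/-- squared Gagliardo seminorm `[u]²` (as an extended nonnegative real). -/
def gagSq (N : ℕ) (s : ℝ) (u : EN N → ℝ) : ℝ≥0∞ :=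
  ∫⁻ x, ∫⁻ y, ENNReal.ofReal ((u x - u y) ^ 2 / ‖x - y‖ ^ ((N : ℝ) + 2 * s))

/-- squared Gagliardo seminorm `[u]²` as a real number. -/
def gagSqR (N : ℕ) (s : ℝ) (u : EN N → ℝ) : ℝ := (gagSq N s u).toReal

/-- the Gagliardo seminorm `[u]`. -/
def gagNorm (N : ℕ) (s : ℝ) (u : EN N → ℝ) : ℝ := Real.sqrt (gagSqR N s u)

/-- `‖u‖₂²`. -/
def l2sq (N : ℕ) (u : EN N → ℝ) : ℝ := ∫ x, (u x) ^ 2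

/-- membership in the fractional Sobolev space `ℋ = H^s`. -/
def memH (N : ℕ) (s : ℝ) (u : EN N → ℝ) : Prop :=
  MemLp u 2 (volume : Measure (EN N)) ∧ gagSq N s u < ⊤

/-- the sphere `S(c) = {u ∈ ℋ : ‖u‖₂² = c}`. -/
def msphere (N : ℕ) (s c : ℝ) : Set (EN N → ℝ) := {u | memH N s u ∧ l2sq N u = c}

/-- the nonlocal term `∫∫ |u(x)|^t |u(y)|^t / |x-y|^{N-α}`; `Q = nlterm N α q`, `P = nlterm N α p`. -/
def nlterm (N : ℕ) (α t : ℝ) (u : EN N → ℝ) : ℝ :=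
  (∫⁻ x, ∫⁻ y, ENNReal.ofReal (|u x| ^ t * |u y| ^ t / ‖x - y‖ ^ ((N : ℝ) - α))).toReal

/-- `‖u‖_ℋ² = [u]² + ‖u‖₂²`. -/
def hNormSq (N : ℕ) (s : ℝ) (u : EN N → ℝ) : ℝ := gagSqR N s u + l2sq N u

/-- `γ_t = (Nt − N − α)/(2ts)`. -/
def gam (N : ℕ) (s α t : ℝ) : ℝ := ((N : ℝ) * t - N - α) / (2 * t * s)

/-- the functional `I_μ`. -/
def Ifun (N : ℕ) (s α q p μ : ℝ) (u : EN N → ℝ) : ℝ :=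
  gagSqR N s u / 2 + μ / 2 * l2sq N u - nlterm N α q u / (2 * q) - nlterm N α p u / (2 * p)

/-- the truncated functional `I_{μ,T}`. -/
def ITfun (N : ℕ) (s α q p μ : ℝ) (τ : ℝ → ℝ) (u : EN N → ℝ) : ℝ :=
  gagSqR N s u / 2 + μ / 2 * l2sq N u - nlterm N α q u / (2 * q)
    - τ (gagNorm N s u) * nlterm N α p u / (2 * p)

/-- the functional `J_ε`. -/
def Jfun (N : ℕ) (s α q p : ℝ) (V : EN N → ℝ) (ε : ℝ) (u : EN N → ℝ) : ℝ :=
  gagSqR N s u / 2 + (∫ x, V (ε • x) * (u x) ^ 2) / 2 - nlterm N α q u / (2 * q)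
    - nlterm N α p u / (2 * p)

/-- the truncated functional `J_{ε,T}`. -/
def JTfun (N : ℕ) (s α q p : ℝ) (V : EN N → ℝ) (ε : ℝ) (τ : ℝ → ℝ) (u : EN N → ℝ) : ℝ :=
  gagSqR N s u / 2 + (∫ x, V (ε • x) * (u x) ^ 2) / 2 - nlterm N α q u / (2 * q)
    - τ (gagNorm N s u) * nlterm N α p u / (2 * p)

/-- the inner product of `ℋ`. -/
def Hinner (N : ℕ) (s : ℝ) (u v : EN N → ℝ) : ℝ :=
  (∫ x, ∫ y, (u x - u y) * (v x - v y) / ‖x - y‖ ^ ((N : ℝ) + 2 * s)) + ∫ x, u x * v x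


private lemma aux_combo {A B bq bp R0 R1 r : ℝ} (hA : 0 ≤ A) (hB : 0 ≤ B)
    (hR0 : 0 < R0) (hR01 : R0 < R1)
    (h0 : A * R0 ^ bq + B * R0 ^ bp = 1) (h1 : A * R1 ^ bq + B * R1 ^ bp = 1)
    (hrl : R0 ≤ r) (hru : r ≤ R1) : A * r ^ bq + B * r ^ bp ≤ 1 := by
  have hR1 : 0 < R1 := hR0.trans hR01
  have hr : 0 < r := hR0.trans_le hrl
  have ht01 : Real.log R0 < Real.log R1 := Real.log_lt_log hR0 hR01
  have ht0 : Real.log R0 ≤ Real.log r := Real.log_le_log hR0 hrl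
  have ht1 : Real.log r ≤ Real.log R1 := Real.log_le_log hr hru
  have hd : 0 < Real.log R1 - Real.log R0 := by linarith
  set lam := (Real.log R1 - Real.log r) / (Real.log R1 - Real.log R0) with hlam
  set mu := (Real.log r - Real.log R0) / (Real.log R1 - Real.log R0) with hmu
  have hlam0 : 0 ≤ lam := div_nonneg (by linarith) hd.le
  have hmu0 : 0 ≤ mu := div_nonneg (by linarith) hd.le
  have hsum : lam + mu = 1 := by
    rw [hlam, hmu, ← add_div, div_eq_one_iff_eq hd.ne']; ring
  have hteq : Real.log r = lam * Real.log R0 + mu * Real.log R1 := by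
    rw [hlam, hmu]; field_simp; ring
  have hexp : ∀ b : ℝ, Real.exp (Real.log r * b) ≤
      lam * Real.exp (Real.log R0 * b) + mu * Real.exp (Real.log R1 * b) := by
    intro b
    have hcx := convexOn_exp.2 (Set.mem_univ (Real.log R0 * b))
      (Set.mem_univ (Real.log R1 * b)) hlam0 hmu0 hsum
    simp only [smul_eq_mul] at hcx
    have harg : lam * (Real.log R0 * b) + mu * (Real.log R1 * b) = Real.log r * b := by
      rw [hteq]; ring
    rw [harg] at hcx
    exact hcx
  rw [Real.rpow_def_of_pos hR0 bq, Real.rpow_def_of_pos hR0 bp] at h0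
  rw [Real.rpow_def_of_pos hR1 bq, Real.rpow_def_of_pos hR1 bp] at h1
  rw [Real.rpow_def_of_pos hr bq, Real.rpow_def_of_pos hr bp]
  have hq := mul_le_mul_of_nonneg_left (hexp bq) hA
  have hp := mul_le_mul_of_nonneg_left (hexp bp) hB
  have hl0 : lam * (A * Real.exp (Real.log R0 * bq) + B * Real.exp (Real.log R0 * bp)) = lam := by
    rw [h0, mul_one]
  have hl1 : mu * (A * Real.exp (Real.log R1 * bq) + B * Real.exp (Real.log R1 * bp)) = mu := by
    rw [h1, mul_one]
  linarith only [hq, hp, hl0, hl1, hsum]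

set_option maxHeartbeats 1000000 in
/-- Lemma 2.4: `Υ_{μ,T,a₁} = m_μ(a₁)` where
`m_μ(a₁) = inf {I_μ(u) : u ∈ S(a₁), [u] < R₀}`. -/
theorem stmt10
    (N : ℕ) (s α q p a Cq Cp : ℝ)
    (hs0 : 0 < s) (hs1 : s < 1) (hN : 2 * s < (N : ℝ))
    (hα0 : 0 < α) (hαN : α < (N : ℝ))
    (hq1 : ((N : ℝ) + α) / N < q) (hq2 : q < ((N : ℝ) + 2 * s + α) / N)
    (hp1 : ((N : ℝ) + 2 * s + α) / N < p) (hp2 : p ≤ ((N : ℝ) + α) / ((N : ℝ) - 2 * s))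
    (ha : 0 < a) (hCq : 0 < Cq) (hCp : 0 < Cp)
    (hGNq : ∀ u, memH N s u → nlterm N α q u ≤
      Cq * gagNorm N s u ^ (2 * q * gam N s α q) *
        Real.sqrt (l2sq N u) ^ (2 * q * (1 - gam N s α q)))
    (hGNp : ∀ u, memH N s u → nlterm N α p u ≤
      Cp * gagNorm N s u ^ (2 * p * gam N s α p) *
        Real.sqrt (l2sq N u) ^ (2 * p * (1 - gam N s α p)))
    (K E : ℝ)
    (hK : K = (p * gam N s α p - q * gam N s α q) / (1 - q * gam N s α q) *
      ((1 - q * gam N s α q) / (p * gam N s α p - 1)) ^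
        ((p * gam N s α p - 1) / (p * gam N s α p - q * gam N s α q)) *
      (Cq / q) ^ ((p * gam N s α p - 1) / (p * gam N s α p - q * gam N s α q)) *
      (Cp / p) ^ ((1 - q * gam N s α q) / (p * gam N s α p - q * gam N s α q)))
    (hE : E = (q * (1 - gam N s α q) * (p * gam N s α p - 1) +
      p * (1 - gam N s α p) * (1 - q * gam N s α q)) / (p * gam N s α p - q * gam N s α q))
    (h14 : K * a ^ E < 1)
    (w : ℝ → ℝ)
    (hw : ∀ r : ℝ, w r = 1 - Cq / q * a ^ (q * (1 - gam N s α q)) * r ^ (2 * q * gam N s α q - 2)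
      - Cp / p * a ^ (p * (1 - gam N s α p)) * r ^ (2 * p * gam N s α p - 2))
    (R0 R1 : ℝ) (hR0 : 0 < R0) (hR01 : R0 < R1) (hwR0 : w R0 = 0) (hwR1 : w R1 = 0)
    (τ : ℝ → ℝ) (hτsm : ContDiff ℝ (⊤ : ℕ∞) τ) (hτanti : AntitoneOn τ (Ici 0))
    (hτ01 : ∀ r : ℝ, 0 ≤ r → τ r ∈ Icc (0 : ℝ) 1)
    (hτone : ∀ r ∈ Icc (0 : ℝ) R0, τ r = 1) (hτzero : ∀ r : ℝ, R1 ≤ r → τ r = 0)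
    (μ a1 : ℝ) (hμ : 0 ≤ μ) (ha1 : 0 < a1) (ha1a : a1 ≤ a)
    (hneg : sInf (ITfun N s α q p μ τ '' msphere N s a1) < 0) :
    sInf (ITfun N s α q p μ τ '' msphere N s a1) =
      sInf (Ifun N s α q p μ '' {u | u ∈ msphere N s a1 ∧ gagNorm N s u < R0}) := by
  
  classical
  have h2s : (0:ℝ) < 2 * s := by linarith
  have hN0 : (0:ℝ) < N := lt_trans h2s hN
  have hq0 : 0 < q := lt_trans (div_pos (by linarith) hN0) hq1
  have hp0 : 0 < p := lt_trans (div_pos (by linarith) hN0) hp1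
  have hNq1 : (N:ℝ) + α < N * q := by
    rw [div_lt_iff₀ hN0] at hq1; linarith
  have hNq2 : (N:ℝ) * q < N + 2*s + α := by
    rw [lt_div_iff₀ hN0] at hq2; linarith
  have hNp1 : (N:ℝ) + 2*s + α < N * p := by
    rw [div_lt_iff₀ hN0] at hp1; linarith
  have hNs : (0:ℝ) < N - 2*s := by linarith
  have hNp2 : p * ((N:ℝ) - 2*s) ≤ N + α := by
    rw [le_div_iff₀ hNs] at hp2; linarith
  have hq1' : 1 < q := by
    have h : (N:ℝ) * 1 < N * q := by linarith
    exact lt_of_mul_lt_mul_left h hN0.le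
  have hp1' : 1 < p := by
    have h : (N:ℝ) * 1 < N * p := by linarith
    exact lt_of_mul_lt_mul_left h hN0.le
  set gq := gam N s α q with hgqdef
  set gp := gam N s α p with hgpdef
  have hqgq : q * gq = ((N:ℝ) * q - N - α) / (2 * s) := by
    rw [hgqdef]; unfold gam; field_simp
  have hpgp : p * gp = ((N:ℝ) * p - N - α) / (2 * s) := by
    rw [hgpdef]; unfold gam; field_simp
  have hqgq0 : 0 < q * gq := by rw [hqgq]; exact div_pos (by linarith) h2s
  have hqgq1 : q * gq < 1 := by rw [hqgq, div_lt_one h2s]; linarith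
  have hpgp1 : 1 < p * gp := by rw [hpgp, one_lt_div h2s]; linarith
  have hpgp0 : 0 < p * gp := lt_trans one_pos hpgp1
  have heq0 : 0 < q * (1 - gq) := by
    have h : q * (1 - gq) = q - q * gq := by ring
    rw [h]; linarith
  have hep0 : 0 ≤ p * (1 - gp) := by
    have h1 : p * (1 - gp) = p - p * gp := by ring
    rw [h1, hpgp, sub_nonneg, div_le_iff₀ h2s]; linarith
  set A := Cq / q * a ^ (q * (1 - gq)) with hAdef
  set B := Cp / p * a ^ (p * (1 - gp)) with hBdef
  have hA : 0 < A := by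
    rw [hAdef]; exact mul_pos (div_pos hCq hq0) (Real.rpow_pos_of_pos ha _)
  have hB : 0 < B := by
    rw [hBdef]; exact mul_pos (div_pos hCp hp0) (Real.rpow_pos_of_pos ha _)
  have hbq : 2 * q * gq - 2 < 0 := by linarith
  have hR1 : 0 < R1 := hR0.trans hR01
  have h0' : A * R0 ^ (2 * q * gq - 2) + B * R0 ^ (2 * p * gp - 2) = 1 := by
    have h := hw R0; rw [hwR0] at h; linarith
  have h1' : A * R1 ^ (2 * q * gq - 2) + B * R1 ^ (2 * p * gp - 2) = 1 := by
    have h := hw R1; rw [hwR1] at h; linarith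
  have hwnn : ∀ r : ℝ, R0 ≤ r → r ≤ R1 →
      A * r ^ (2 * q * gq - 2) + B * r ^ (2 * p * gp - 2) ≤ 1 :=
    fun r h1 h2 => aux_combo hA.le hB.le hR0 hR01 h0' h1' h1 h2
  have hAR1 : A * R1 ^ (2 * q * gq - 2) ≤ 1 := by
    linarith only [h1', mul_nonneg hB.le (Real.rpow_nonneg hR1.le (2 * p * gp - 2))]
  set M := A / 2 * R1 ^ (2 * q * gq) + B / 2 * R1 ^ (2 * p * gp) with hMdef
  have hM0 : 0 ≤ M := by
    rw [hMdef]
    exact add_nonneg (mul_nonneg (by linarith) (Real.rpow_nonneg hR1.le _))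
      (mul_nonneg (by linarith) (Real.rpow_nonneg hR1.le _))
  -- key nonnegativity
  have key : ∀ u, u ∈ msphere N s a1 → R0 ≤ gagNorm N s u →
      0 ≤ ITfun N s α q p μ τ u := by
    rintro u ⟨hu, hl2⟩ hR0r
    set r := gagNorm N s u with hrdef
    have hr0 : 0 ≤ r := by rw [hrdef]; exact Real.sqrt_nonneg _
    have hgag0 : 0 ≤ gagSqR N s u := ENNReal.toReal_nonneg
    have hgag : gagSqR N s u = r ^ 2 := by
      rw [hrdef]; exact (Real.sq_sqrt hgag0).symm
    have hQ := hGNq u hu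
    have hP := hGNp u hu
    rw [hl2, ← hrdef] at hQ hP
    have hsqq : Real.sqrt a1 ^ (2 * q * (1 - gq)) = a1 ^ (q * (1 - gq)) := by
      rw [Real.sqrt_eq_rpow, ← Real.rpow_mul ha1.le]; congr 1; ring
    have hsqp : Real.sqrt a1 ^ (2 * p * (1 - gp)) = a1 ^ (p * (1 - gp)) := by
      rw [Real.sqrt_eq_rpow, ← Real.rpow_mul ha1.le]; congr 1; ring
    rw [hsqq] at hQ
    rw [hsqp] at hP
    have haq : a1 ^ (q * (1 - gq)) ≤ a ^ (q * (1 - gq)) :=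
      Real.rpow_le_rpow ha1.le ha1a heq0.le
    have hap : a1 ^ (p * (1 - gp)) ≤ a ^ (p * (1 - gp)) :=
      Real.rpow_le_rpow ha1.le ha1a hep0
    have hrq0 : 0 ≤ Cq * r ^ (2 * q * gq) := mul_nonneg hCq.le (Real.rpow_nonneg hr0 _)
    have hrp0 : 0 ≤ Cp * r ^ (2 * p * gp) := mul_nonneg hCp.le (Real.rpow_nonneg hr0 _)
    have hAq : Cq * a ^ (q * (1 - gq)) = q * A := by rw [hAdef]; field_simp
    have hBp : Cp * a ^ (p * (1 - gp)) = p * B := by rw [hBdef]; field_simp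
    have hQ4 : nlterm N α q u ≤ q * A * r ^ (2 * q * gq) := by
      calc nlterm N α q u ≤ Cq * r ^ (2 * q * gq) * a ^ (q * (1 - gq)) :=
            hQ.trans (mul_le_mul_of_nonneg_left haq hrq0)
        _ = q * A * r ^ (2 * q * gq) := by rw [← hAq]; ring
    have hP4 : nlterm N α p u ≤ p * B * r ^ (2 * p * gp) := by
      calc nlterm N α p u ≤ Cp * r ^ (2 * p * gp) * a ^ (p * (1 - gp)) :=
            hP.trans (mul_le_mul_of_nonneg_left hap hrp0)
        _ = p * B * r ^ (2 * p * gp) := by rw [← hBp]; ring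
    obtain ⟨hτ0r, hτ1r⟩ := hτ01 r hr0
    have hPge : 0 ≤ nlterm N α p u := ENNReal.toReal_nonneg
    have hQge : 0 ≤ nlterm N α q u := ENNReal.toReal_nonneg
    have hIT : ITfun N s α q p μ τ u =
        r ^ 2 / 2 + μ / 2 * a1 - nlterm N α q u / (2 * q)
          - τ r * nlterm N α p u / (2 * p) := by
      simp only [ITfun]
      rw [hgag, hl2, ← hrdef]
    rw [hIT]
    have hrpos : 0 < r := lt_of_lt_of_le hR0 hR0r
    have hsplitq : r ^ (2 * q * gq) = r ^ 2 * r ^ (2 * q * gq - 2) := by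
      rw [← Real.rpow_natCast r 2, ← Real.rpow_add hrpos]
      congr 1; push_cast; ring
    have hsplitp : r ^ (2 * p * gp) = r ^ 2 * r ^ (2 * p * gp - 2) := by
      rw [← Real.rpow_natCast r 2, ← Real.rpow_add hrpos]
      congr 1; push_cast; ring
    rcases le_or_gt r R1 with hcase | hcase
    · have hwr := hwnn r hR0r hcase
      have hτP : τ r * nlterm N α p u ≤ nlterm N α p u :=
        mul_le_of_le_one_left hPge hτ1r
      have hXq : nlterm N α q u / (2 * q) ≤ A * r ^ (2 * q * gq - 2) * r ^ 2 / 2 := by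
        rw [div_le_div_iff₀ (by linarith only [hq0] : (0:ℝ) < 2 * q) two_pos]
        calc nlterm N α q u * 2 ≤ q * A * (r ^ 2 * r ^ (2 * q * gq - 2)) * 2 := by
              rw [← hsplitq]; linarith only [hQ4]
          _ = A * r ^ (2 * q * gq - 2) * r ^ 2 * (2 * q) := by ring
      have hXp : τ r * nlterm N α p u / (2 * p) ≤ B * r ^ (2 * p * gp - 2) * r ^ 2 / 2 := by
        rw [div_le_div_iff₀ (by linarith only [hp0] : (0:ℝ) < 2 * p) two_pos]
        calc τ r * nlterm N α p u * 2 ≤ p * B * (r ^ 2 * r ^ (2 * p * gp - 2)) * 2 := by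
              rw [← hsplitp]; linarith only [hP4, hτP]
          _ = B * r ^ (2 * p * gp - 2) * r ^ 2 * (2 * p) := by ring
      have hkey : (0:ℝ) ≤ r ^ 2 * (1 - A * r ^ (2 * q * gq - 2) - B * r ^ (2 * p * gp - 2)) :=
        mul_nonneg (sq_nonneg r) (by linarith)
      linarith only [hXq, hXp, hkey, mul_nonneg hμ ha1.le]
    · have hτr : τ r = 0 := hτzero r hcase.le
      rw [hτr, zero_mul, zero_div, sub_zero]
      have hrR1 : r ^ (2 * q * gq - 2) ≤ R1 ^ (2 * q * gq - 2) :=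
        Real.rpow_le_rpow_of_nonpos hR1 hcase.le (by linarith)
      have h5 : nlterm N α q u ≤ q * A * (r ^ 2 * R1 ^ (2 * q * gq - 2)) := by
        rw [hsplitq] at hQ4
        have h6 := mul_le_mul_of_nonneg_left hrR1
          (mul_nonneg (mul_nonneg hq0.le hA.le) (sq_nonneg r))
        linarith only [hQ4, h6]
      have hXq : nlterm N α q u / (2 * q) ≤ A * R1 ^ (2 * q * gq - 2) * r ^ 2 / 2 := by
        rw [div_le_div_iff₀ (by linarith only [hq0] : (0:ℝ) < 2 * q) two_pos]
        linarith only [h5]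
      have hfin : A * R1 ^ (2 * q * gq - 2) * r ^ 2 / 2 ≤ r ^ 2 / 2 := by
        linarith only [mul_nonneg (sub_nonneg.mpr hAR1) (sq_nonneg r)]
      linarith only [hXq, hfin, mul_nonneg hμ ha1.le]
  -- lower bound
  have lb : ∀ u, u ∈ msphere N s a1 → -M ≤ ITfun N s α q p μ τ u := by
    intro u huS
    rcases le_or_gt (gagNorm N s u) R1 with hcase | hcase
    · obtain ⟨hu, hl2⟩ := huS
      set r := gagNorm N s u with hrdef
      have hr0 : 0 ≤ r := by rw [hrdef]; exact Real.sqrt_nonneg _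
      have hgag0 : 0 ≤ gagSqR N s u := ENNReal.toReal_nonneg
      have hgag : gagSqR N s u = r ^ 2 := by
        rw [hrdef]; exact (Real.sq_sqrt hgag0).symm
      have hQ := hGNq u hu
      have hP := hGNp u hu
      rw [hl2, ← hrdef] at hQ hP
      have hsqq : Real.sqrt a1 ^ (2 * q * (1 - gq)) = a1 ^ (q * (1 - gq)) := by
        rw [Real.sqrt_eq_rpow, ← Real.rpow_mul ha1.le]; congr 1; ring
      have hsqp : Real.sqrt a1 ^ (2 * p * (1 - gp)) = a1 ^ (p * (1 - gp)) := by
        rw [Real.sqrt_eq_rpow, ← Real.rpow_mul ha1.le]; congr 1; ring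
      rw [hsqq] at hQ
      rw [hsqp] at hP
      have haq : a1 ^ (q * (1 - gq)) ≤ a ^ (q * (1 - gq)) :=
        Real.rpow_le_rpow ha1.le ha1a heq0.le
      have hap : a1 ^ (p * (1 - gp)) ≤ a ^ (p * (1 - gp)) :=
        Real.rpow_le_rpow ha1.le ha1a hep0
      have hrq0 : 0 ≤ Cq * r ^ (2 * q * gq) := mul_nonneg hCq.le (Real.rpow_nonneg hr0 _)
      have hrp0 : 0 ≤ Cp * r ^ (2 * p * gp) := mul_nonneg hCp.le (Real.rpow_nonneg hr0 _)
      have hAq : Cq * a ^ (q * (1 - gq)) = q * A := by rw [hAdef]; field_simp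
      have hBp : Cp * a ^ (p * (1 - gp)) = p * B := by rw [hBdef]; field_simp
      have hQ4 : nlterm N α q u ≤ q * A * r ^ (2 * q * gq) := by
        calc nlterm N α q u ≤ Cq * r ^ (2 * q * gq) * a ^ (q * (1 - gq)) :=
              hQ.trans (mul_le_mul_of_nonneg_left haq hrq0)
          _ = q * A * r ^ (2 * q * gq) := by rw [← hAq]; ring
      have hP4 : nlterm N α p u ≤ p * B * r ^ (2 * p * gp) := by
        calc nlterm N α p u ≤ Cp * r ^ (2 * p * gp) * a ^ (p * (1 - gp)) :=
              hP.trans (mul_le_mul_of_nonneg_left hap hrp0)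
          _ = p * B * r ^ (2 * p * gp) := by rw [← hBp]; ring
      obtain ⟨hτ0r, hτ1r⟩ := hτ01 r hr0
      have hPge : 0 ≤ nlterm N α p u := ENNReal.toReal_nonneg
      have hQge : 0 ≤ nlterm N α q u := ENNReal.toReal_nonneg
      have hIT : ITfun N s α q p μ τ u =
          r ^ 2 / 2 + μ / 2 * a1 - nlterm N α q u / (2 * q)
            - τ r * nlterm N α p u / (2 * p) := by
        simp only [ITfun]
        rw [hgag, hl2, ← hrdef]
      rw [hIT]
      have hrq : r ^ (2 * q * gq) ≤ R1 ^ (2 * q * gq) :=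
        Real.rpow_le_rpow hr0 hcase (by linarith)
      have hrp : r ^ (2 * p * gp) ≤ R1 ^ (2 * p * gp) :=
        Real.rpow_le_rpow hr0 hcase (by linarith)
      have hXq : nlterm N α q u / (2 * q) ≤ A / 2 * R1 ^ (2 * q * gq) := by
        rw [div_le_iff₀ (by linarith : (0:ℝ) < 2 * q)]
        have h6 := mul_le_mul_of_nonneg_left hrq (mul_nonneg hq0.le hA.le)
        linarith only [hQ4, h6]
      have hXp : τ r * nlterm N α p u / (2 * p) ≤ B / 2 * R1 ^ (2 * p * gp) := by
        rw [div_le_iff₀ (by linarith : (0:ℝ) < 2 * p)]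
        have h6 : τ r * nlterm N α p u ≤ nlterm N α p u :=
          mul_le_of_le_one_left hPge hτ1r
        have h7 := mul_le_mul_of_nonneg_left hrp (mul_nonneg hp0.le hB.le)
        linarith only [h6, hP4, h7]
      rw [hMdef]
      linarith only [hXq, hXp, sq_nonneg r, mul_nonneg hμ ha1.le]
    · have h7 := key u huS (by linarith only [hR01, hcase] : R0 ≤ gagNorm N s u)
      linarith only [h7, hM0]
  -- set-level argument
  have hgnn : ∀ v : EN N → ℝ, 0 ≤ gagNorm N s v := fun v => Real.sqrt_nonneg _
  have hFG : ∀ u : EN N → ℝ, gagNorm N s u < R0 →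
      ITfun N s α q p μ τ u = Ifun N s α q p μ u := by
    intro u h
    simp only [ITfun, Ifun]
    rw [hτone (gagNorm N s u) ⟨hgnn u, h.le⟩]
    ring
  have hne : (ITfun N s α q p μ τ '' msphere N s a1).Nonempty := by
    rcases Set.eq_empty_or_nonempty (ITfun N s α q p μ τ '' msphere N s a1) with h | h
    · rw [h, Real.sInf_empty] at hneg; norm_num at hneg
    · exact h
  have hbdd : BddBelow (ITfun N s α q p μ τ '' msphere N s a1) := by
    refine ⟨-M, ?_⟩
    rintro y ⟨u, huS, rfl⟩
    exact lb u huS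
  obtain ⟨y0, hy0mem, hy0neg⟩ := exists_lt_of_csInf_lt hne hneg
  obtain ⟨u0, hu0S, rfl⟩ := hy0mem
  have hu0r : gagNorm N s u0 < R0 := by
    by_contra h
    push_neg at h
    linarith only [key u0 hu0S h, hy0neg]
  have hu0m : u0 ∈ {u | u ∈ msphere N s a1 ∧ gagNorm N s u < R0} := ⟨hu0S, hu0r⟩
  have hsub : Ifun N s α q p μ '' {u | u ∈ msphere N s a1 ∧ gagNorm N s u < R0} ⊆
      ITfun N s α q p μ τ '' msphere N s a1 := by
    rintro y ⟨u, ⟨huS, hur⟩, rfl⟩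
    exact ⟨u, huS, hFG u hur⟩
  have hmne : (Ifun N s α q p μ '' {u | u ∈ msphere N s a1 ∧ gagNorm N s u < R0}).Nonempty :=
    ⟨Ifun N s α q p μ u0, u0, hu0m, rfl⟩
  have hmbdd : BddBelow (Ifun N s α q p μ '' {u | u ∈ msphere N s a1 ∧ gagNorm N s u < R0}) :=
    hbdd.mono hsub
  have hle1 : sInf (ITfun N s α q p μ τ '' msphere N s a1) ≤
      sInf (Ifun N s α q p μ '' {u | u ∈ msphere N s a1 ∧ gagNorm N s u < R0}) :=
    csInf_le_csInf hbdd hmne hsub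
  have hle2 : sInf (Ifun N s α q p μ '' {u | u ∈ msphere N s a1 ∧ gagNorm N s u < R0}) ≤
      sInf (ITfun N s α q p μ τ '' msphere N s a1) := by
    refine le_csInf hne ?_
    rintro y ⟨u, huS, rfl⟩
    rcases lt_or_ge (gagNorm N s u) R0 with hur | hur
    · calc sInf (Ifun N s α q p μ '' {u | u ∈ msphere N s a1 ∧ gagNorm N s u < R0})
          ≤ Ifun N s α q p μ u := csInf_le hmbdd ⟨u, ⟨huS, hur⟩, rfl⟩
        _ = ITfun N s α q p μ τ u := (hFG u hur).symm
    · have h8 := key u huS hur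
      have h9 : sInf (Ifun N s α q p μ '' {u | u ∈ msphere N s a1 ∧ gagNorm N s u < R0})
          ≤ Ifun N s α q p μ u0 := csInf_le hmbdd ⟨u0, hu0m, rfl⟩
      have h10 : Ifun N s α q p μ u0 = ITfun N s α q p μ τ u0 := (hFG u0 hu0r).symm
      linarith only [h8, h9, h10, hy0neg]
  exact le_antisymm hle1 hle2
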